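/- For any positive integer d and any ε ∈ (0,1), there exists an ε-net of the unit sphere of ℝ^d (with respect to the Euclidean norm) of cardinality at most 2d(1+2/ε)^{d−1}. -/

import Mathlib

open Real

/-- The Euclidean norm of a vector in `k → ℝ`. -/
noncomputable def euclNorm {k : Type*} [Fintype k] (v : k → ℝ) : ℝ :=
  Real.sqrt (∑ i, v i ^ 2)

/-- `N` is an `ε`-net of the unit sphere of `ℝ^k`: a finite subset of the sphere such that
every point of the sphere is within Euclidean distance `ε` of some point of `N`. -/
def IsSphereNet {k : Type*} [Fintype k] (ε : ℝ) (N : Finset (k → ℝ)) : Prop :=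
  (∀ x ∈ N, euclNorm x = 1) ∧
    ∀ x : k → ℝ, euclNorm x = 1 → ∃ y ∈ N, euclNorm (x - y) ≤ ε

/-!
A maximal `ε`-separated subset `N` of the unit sphere is an `ε`-net. Around each `y ∈ N` take the
outer half `{z ∈ B(y, ε/2) | ⟪z - y, y⟫ ≥ 0}` of the ball of radius `ε/2`: these half-balls are
pairwise disjoint, each has half the volume of the full ball (reflect through `y`), and all of
them lie in the shell `1 ≤ ‖z‖ < 1 + ε/2`. Comparing volumes gives
`|N| (ε/2)^d ≤ 2((1 + ε/2)^d - 1) ≤ d ε (1 + ε/2)^(d-1)`.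
-/

open MeasureTheory Metric Module
open scoped NNReal ENNReal RealInnerProductSpace

section

variable {E : Type*} [NormedAddCommGroup E] [InnerProductSpace ℝ E]

def outerHalfBall (y : E) (r : ℝ) : Set E :=
  ball y r ∩ {z | 0 ≤ ⟪z - y, y⟫}

lemma outerHalfBall_subset_ball_sdiff_ball {y : E} (hy : ‖y‖ = 1) (r : ℝ) :
    outerHalfBall y r ⊆ ball 0 (1 + r) \ ball 0 1 := by
  rintro z ⟨hzy, hz⟩
  simp only [Set.mem_ofPred_eq, inner_sub_left, real_inner_self_eq_norm_sq, hy] at hz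
  rw [mem_ball, dist_eq_norm] at hzy
  have h1 : 1 ≤ ‖z‖ := by
    have := real_inner_le_norm z y
    rw [hy, mul_one] at this
    linarith
  refine ⟨?_, ?_⟩
  · rw [mem_ball_zero_iff]
    linarith [norm_le_norm_add_norm_sub' z y]
  · simpa using h1

variable [MeasurableSpace E] [BorelSpace E]

lemma measurableSet_outerHalfBall (y : E) (r : ℝ) : MeasurableSet (outerHalfBall y r) :=
  measurableSet_ball.inter (measurableSet_le measurable_const (by fun_prop))

lemma measure_ball_le_two_mul_outerHalfBall (μ : Measure E) [μ.IsAddLeftInvariant]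
    [μ.IsNegInvariant] (y : E) (r : ℝ) : μ (ball y r) ≤ 2 * μ (outerHalfBall y r) := by
  -- the point reflection through `y` preserves `ball y r` and flips the sign of `⟪z - y, y⟫`
  have hreflect := Measure.measurePreserving_sub_left μ (y + y)
  have hcover : ball y r ⊆ outerHalfBall y r ∪ (fun z => y + y - z) ⁻¹' outerHalfBall y r := by
    intro z hz
    have hneg : y + y - z - y = -(z - y) := by abel
    by_cases h : 0 ≤ ⟪z - y, y⟫
    · exact Or.inl ⟨hz, h⟩
    · refine Or.inr ⟨?_, ?_⟩
      · show y + y - z ∈ ball y r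
        rwa [mem_ball, dist_eq_norm, hneg, norm_neg, ← dist_eq_norm]
      · simp only [Set.mem_ofPred_eq, hneg, inner_neg_left]
        linarith
  calc μ (ball y r)
      ≤ μ (outerHalfBall y r) + μ ((fun z => y + y - z) ⁻¹' outerHalfBall y r) :=
        (measure_mono hcover).trans (measure_union_le _ _)
    _ = 2 * μ (outerHalfBall y r) := by
        rw [hreflect.measure_preimage (measurableSet_outerHalfBall y r).nullMeasurableSet, two_mul]

lemma card_mul_measure_ball_add_le (μ : Measure E) [μ.IsAddHaarMeasure] [μ.IsNegInvariant]
    {N : Finset E} {r : ℝ} (hr : 0 ≤ r) (hN : ∀ x ∈ N, ‖x‖ = 1)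
    (hsep : (N : Set E).Pairwise fun x y => 2 * r ≤ dist x y) :
    N.card * μ (ball 0 r) + 2 * μ (ball 0 1) ≤ 2 * μ (ball 0 (1 + r)) := by
  have hdisj : (N : Set E).PairwiseDisjoint (outerHalfBall · r) := fun x hx y hy hxy =>
    (ball_disjoint_ball (by linarith [hsep hx hy hxy])).mono Set.inter_subset_left
      Set.inter_subset_left
  have hshell : (⋃ y ∈ N, outerHalfBall y r) ∪ ball 0 1 ⊆ ball 0 (1 + r) :=
    Set.union_subset (Set.iUnion₂_subset fun y hy =>
      (outerHalfBall_subset_ball_sdiff_ball (hN y hy) r).trans Set.sdiff_subset)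
      (ball_subset_ball (by linarith))
  have hdisj_shell : Disjoint (⋃ y ∈ N, outerHalfBall y r) (ball 0 1) :=
    Set.disjoint_iUnion₂_left.mpr fun y hy =>
      Set.disjoint_of_subset_left (outerHalfBall_subset_ball_sdiff_ball (hN y hy) r)
        Set.disjoint_sdiff_left
  calc N.card * μ (ball 0 r) + 2 * μ (ball 0 1)
      = ∑ y ∈ N, μ (ball y r) + 2 * μ (ball 0 1) := by
        simp [Measure.addHaar_ball_center μ _ r]
    _ ≤ ∑ y ∈ N, 2 * μ (outerHalfBall y r) + 2 * μ (ball 0 1) := by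
        gcongr with y
        exact measure_ball_le_two_mul_outerHalfBall μ y r
    _ = 2 * μ ((⋃ y ∈ N, outerHalfBall y r) ∪ ball 0 1) := by
        rw [← Finset.mul_sum, ← measure_biUnion_finset hdisj fun y _ =>
          measurableSet_outerHalfBall y r, ← mul_add, measure_union hdisj_shell measurableSet_ball]
    _ ≤ 2 * μ (ball 0 (1 + r)) := by gcongr

theorem card_mul_pow_add_two_le [FiniteDimensional ℝ E] [Nontrivial E] {N : Finset E} {r : ℝ}
    (hr : 0 ≤ r) (hN : ∀ x ∈ N, ‖x‖ = 1)
    (hsep : (N : Set E).Pairwise fun x y => 2 * r ≤ dist x y) :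
    N.card * r ^ finrank ℝ E + 2 ≤ 2 * (1 + r) ^ finrank ℝ E := by
  set μ : Measure E := Measure.addHaar
  have h := card_mul_measure_ball_add_le μ hr hN hsep
  rw [Measure.addHaar_ball μ 0 hr, Measure.addHaar_ball μ 0 (r := 1 + r) (by linarith)] at h
  have hv₀ : μ (ball 0 1) ≠ 0 := (measure_ball_pos μ 0 one_pos).ne'
  have hv_top : μ (ball 0 1) ≠ ⊤ := measure_ball_lt_top.ne
  rw [← ENNReal.ofReal_le_ofReal_iff (by positivity), ← ENNReal.mul_le_mul_iff_left hv₀ hv_top]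
  convert h using 1
  · rw [ENNReal.ofReal_add (by positivity) zero_le_two, ENNReal.ofReal_mul (by positivity)]
    simp only [ENNReal.ofReal_natCast, ENNReal.ofReal_ofNat]
    ring
  · rw [ENNReal.ofReal_mul zero_le_two, ENNReal.ofReal_ofNat, mul_assoc]

theorem card_le_of_pairwise_le_dist [FiniteDimensional ℝ E] [Nontrivial E] {N : Finset E} {ε : ℝ}
    (hε : 0 < ε) (hN : ∀ x ∈ N, ‖x‖ = 1) (hsep : (N : Set E).Pairwise fun x y => ε ≤ dist x y) :
    N.card ≤ 2 * finrank ℝ E * (1 + 2 / ε) ^ (finrank ℝ E - 1) := by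
  obtain ⟨m, hm⟩ : ∃ m, finrank ℝ E = m + 1 :=
    Nat.exists_eq_add_one_of_ne_zero finrank_pos.ne'
  set r := ε / 2
  have hr : 0 < r := half_pos hε
  have hvol := card_mul_pow_add_two_le hr.le hN (by simpa [r, mul_div_cancel₀] using hsep)
  -- becomes `(1 + r) ^ (m + 1) - 1 ≤ r (m + 1) (1 + r) ^ m`
  have hmv := abs_pow_sub_pow_le (1 + r) 1 (m + 1)
  rw [abs_of_nonneg (by simp [one_le_pow₀, hr.le] : (0 : ℝ) ≤ (1 + r) ^ (m + 1) - 1 ^ (m + 1)),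
    add_sub_cancel_left, abs_of_pos hr, abs_of_pos (by linarith), abs_one,
    max_eq_left (by linarith), Nat.add_sub_cancel, one_pow] at hmv
  have hbase : 1 + 2 / ε = (1 + r) / r := by field_simp [r]; ring
  rw [hm, Nat.add_sub_cancel, hbase, div_pow, ← mul_le_mul_iff_left₀ (pow_pos hr (m + 1))]
  rw [hm] at hvol
  calc (N.card : ℝ) * r ^ (m + 1) ≤ 2 * (r * (m + 1 : ℕ) * (1 + r) ^ m) := by linarith
    _ = 2 * (m + 1 : ℕ) * ((1 + r) ^ m / r ^ m) * r ^ (m + 1) := by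
        field_simp
        ring

lemma packingNumber_ne_top_of_card_le {X : Type*} [PseudoEMetricSpace X] {ε : ℝ≥0} {A : Set X}
    (k : ℕ) (h : ∀ N : Finset X, ↑N ⊆ A → IsSeparated ε (N : Set X) → N.card ≤ k) :
    packingNumber ε A ≠ ⊤ := by
  refine ne_top_of_le_ne_top (ENat.natCast_ne_top k) (iSup₂_le fun C hCA => iSup_le fun hC => ?_)
  by_contra! hlt
  obtain ⟨t, htC, ht⟩ := Set.exists_subset_encard_eq (Order.add_one_le_of_lt hlt)
  have htfin : t.Finite := Set.finite_of_encard_eq_coe ht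
  have := h htfin.toFinset (by simpa using htC.trans hCA) (by simpa using hC.subset htC)
  rw [htfin.encard_eq_coe_toFinset_card] at ht
  norm_cast at ht
  omega

theorem exists_finset_isCover_sphere_card_le [FiniteDimensional ℝ E] [Nontrivial E] {ε : ℝ≥0}
    (hε : 0 < ε) :
    ∃ N : Finset E, ↑N ⊆ sphere (0 : E) 1 ∧ IsCover ε (sphere (0 : E) 1) N ∧
      N.card ≤ 2 * finrank ℝ E * (1 + 2 / (ε : ℝ)) ^ (finrank ℝ E - 1) := by
  have hcard (N : Finset E) (hNS : ↑N ⊆ sphere (0 : E) 1) (hN : IsSeparated ε (N : Set E)) :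
      N.card ≤ 2 * finrank ℝ E * (1 + 2 / (ε : ℝ)) ^ (finrank ℝ E - 1) :=
    card_le_of_pairwise_le_dist hε (fun x hx => by simpa using hNS hx) fun x hx y hy hxy => by
      have : (ε : ℝ≥0∞) < edist x y := hN hx hy hxy
      rw [edist_dist, ENNReal.coe_lt_ofReal] at this
      exact this.le
  have hpack := packingNumber_ne_top_of_card_le _ fun N hNS hN =>
    Nat.le_floor (hcard N hNS hN)
  have hfin : (maximalSeparatedSet ε (sphere (0 : E) 1)).Finite := by
    rw [← Set.encard_ne_top_iff, encard_maximalSeparatedSet hpack]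
    exact hpack
  refine ⟨hfin.toFinset, ?_, ?_, hcard _ ?_ ?_⟩ <;> simp only [Set.Finite.coe_toFinset]
  · exact maximalSeparatedSet_subset
  · exact isCover_maximalSeparatedSet hpack
  · exact maximalSeparatedSet_subset
  · exact isSeparated_maximalSeparatedSet

end

lemma euclNorm_eq_norm_toLp {k : Type*} [Fintype k] (v : k → ℝ) :
    euclNorm v = ‖WithLp.toLp 2 v‖ := by
  simp [euclNorm, EuclideanSpace.norm_eq]

lemma isSphereNet_image_ofLp {k : Type*} [Fintype k] {ε : ℝ≥0} {N : Finset (EuclideanSpace ℝ k)}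
    (hNS : (N : Set (EuclideanSpace ℝ k)) ⊆ sphere 0 1)
    (hN : IsCover ε (sphere 0 1) (N : Set (EuclideanSpace ℝ k))) :
    IsSphereNet ε (N.image WithLp.ofLp) := by
  refine ⟨fun _ hx => ?_, fun x hx => ?_⟩
  · obtain ⟨x, hxN, rfl⟩ := Finset.mem_image.mp hx
    simpa [euclNorm_eq_norm_toLp] using hNS hxN
  · have hx' : WithLp.toLp 2 x ∈ sphere (0 : EuclideanSpace ℝ k) 1 := by
      simpa [euclNorm_eq_norm_toLp] using hx
    obtain ⟨y, hy, hxy⟩ := Set.mem_iUnion₂.mp (isCover_iff_subset_iUnion_closedBall.mp hN hx')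
    refine ⟨y.ofLp, Finset.mem_image_of_mem _ hy, ?_⟩
    simpa [euclNorm_eq_norm_toLp, dist_eq_norm] using hxy

/-- **(Rudelson–Vershynin, Proposition 2.1.)** For any positive integer `d` and any
`ε ∈ (0,1)`, the unit sphere of `ℝ^d` admits an `ε`-net of cardinality at most
`2d(1 + 2/ε)^(d-1)`. -/
theorem exists_sphere_net (d : ℕ) (hd : 0 < d) (ε : ℝ) (hε : ε ∈ Set.Ioo (0 : ℝ) 1) :
    ∃ N : Finset (Fin d → ℝ), IsSphereNet ε N ∧
      (N.card : ℝ) ≤ 2 * d * (1 + 2 / ε) ^ ((d : ℝ) - 1) := by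
  have : Nonempty (Fin d) := ⟨⟨0, hd⟩⟩
  obtain ⟨N, hNS, hNcover, hNcard⟩ :=
    exists_finset_isCover_sphere_card_le (E := EuclideanSpace ℝ (Fin d)) (ε := ⟨ε, hε.1.le⟩) hε.1
  refine ⟨N.image WithLp.ofLp, isSphereNet_image_ofLp hNS hNcover, ?_⟩
  rw [finrank_euclideanSpace_fin] at hNcard
  rw [← Nat.cast_pred hd, Real.rpow_natCast]
  exact (Nat.cast_le.mpr Finset.card_image_le).trans hNcard
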